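/- arXiv:2502.03599 — 2 statements merged into one kernel-verified Lean document; each statement's English description precedes it below -/
import Mathlib

section
/- Let φ(z) = z/(1+z) and let f : [0,∞) → ℝ be smooth. For every k ∈ ℕ there exist smooth bounded functions c^k_{j,φ} of z, j = 0,…,k, with c^k_{k,φ} = 1, such that (φ ∂_z)^k (∂_z f) = Σ_{j=0}^k c^k_{j,φ} ∂_z (φ ∂_z)^j f. -/
open Set Polynomial

/-- The conormal vertical derivative `Z₃ = φ(z) ∂_z` with `φ(z) = z/(1+z)`. -/
noncomputable def Zop : (ℝ → ℝ) → ℝ → ℝ := fun g z => (z / (1 + z)) * deriv g z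

/-- Coefficient polynomials in the variable `u = 1/(1+z)`. -/
noncomputable def Pc : ℕ → ℕ → Polynomial ℝ
  | 0, j => if j = 0 then 1 else 0
  | k+1, j => (1 - X) * (-X ^ 2) * derivative (Pc k j) - X ^ 2 * Pc k j +
      if j = 0 then 0 else Pc k (j - 1)

lemma Pc_zero_of_lt : ∀ k j, k < j → Pc k j = 0 := by
  intro k
  induction k with
  | zero => intro j hj; simp only [Pc]; rw [if_neg (by omega)]
  | succ k ih =>
      intro j hj
      simp only [Pc]
      rw [ih j (by omega), if_neg (by omega : ¬ j = 0), ih (j-1) (by omega)]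
      simp

lemma Pc_diag : ∀ k, Pc k k = 1 := by
  intro k
  induction k with
  | zero => simp [Pc]
  | succ k ih =>
      simp only [Pc]
      rw [Pc_zero_of_lt k (k+1) (by omega), if_neg (by omega : ¬ k + 1 = 0)]
      simp [ih]

/-- The coefficient functions. -/
noncomputable def cf (k j : ℕ) (z : ℝ) : ℝ := (Pc k j).eval (1 / (1 + z))

lemma mem_ne (z : ℝ) (hz : z ∈ Ioi (-1:ℝ)) : 1 + z ≠ 0 := by
  simp only [mem_Ioi] at hz; intro h; linarith

lemma contDiffOn_u : ContDiffOn ℝ (⊤ : ℕ∞) (fun z : ℝ => 1 / (1 + z)) (Ioi (-1)) := by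
  apply ContDiffOn.div contDiffOn_const (contDiffOn_const.add contDiffOn_id) mem_ne

lemma contDiffOn_cf (k j : ℕ) : ContDiffOn ℝ (⊤ : ℕ∞) (cf k j) (Ioi (-1)) := by
  unfold cf
  induction (Pc k j) using Polynomial.induction_on' with
  | add p q hp hq => simpa [Polynomial.eval_add] using hp.add hq
  | monomial n a =>
      simp only [Polynomial.eval_monomial]
      exact contDiffOn_const.mul (contDiffOn_u.pow n)

lemma hasDerivAt_u (z : ℝ) (hz : (1:ℝ) + z ≠ 0) :
    HasDerivAt (fun z : ℝ => 1 / (1 + z)) (-(1 / (1 + z)) ^ 2) z := by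
  have h : HasDerivAt (fun z : ℝ => 1 + z) 1 z := (hasDerivAt_id z).const_add 1
  have h2 := h.inv hz
  simp only [one_div]
  refine h2.congr_deriv ?_
  rw [inv_pow, neg_div, one_div]

lemma hasDerivAt_cf (k j : ℕ) (z : ℝ) (hz : (1:ℝ) + z ≠ 0) :
    HasDerivAt (cf k j)
      ((Pc k j).derivative.eval (1 / (1 + z)) * (-(1 / (1 + z)) ^ 2)) z := by
  exact ((Pc k j).hasDerivAt (1 / (1 + z))).comp z (hasDerivAt_u z hz)

lemma hasDerivAt_phi (z : ℝ) (hz : (1:ℝ) + z ≠ 0) :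
    HasDerivAt (fun z : ℝ => z / (1 + z)) ((1 / (1 + z)) ^ 2) z := by
  have h1 : HasDerivAt (fun z : ℝ => z) 1 z := hasDerivAt_id z
  have h2 : HasDerivAt (fun z : ℝ => 1 + z) 1 z := (hasDerivAt_id z).const_add 1
  have := h1.div h2 hz
  refine this.congr_deriv ?_
  rw [div_pow, one_pow]; congr 1; ring

lemma phi_eq (z : ℝ) (hz : (1:ℝ) + z ≠ 0) : z / (1 + z) = 1 - 1 / (1 + z) := by
  field_simp
  ring

lemma diffAt_of_cdOn {g : ℝ → ℝ} (hg : ContDiffOn ℝ (⊤ : ℕ∞) g (Ioi (-1)))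
    {z : ℝ} (hz : z ∈ Ioi (-1:ℝ)) : DifferentiableAt ℝ g z :=
  (hg.contDiffAt (isOpen_Ioi.mem_nhds hz)).differentiableAt (by simp)

lemma derivOn {g : ℝ → ℝ} (hg : ContDiffOn ℝ (⊤ : ℕ∞) g (Ioi (-1))) :
    ContDiffOn ℝ (⊤ : ℕ∞) (deriv g) (Ioi (-1)) :=
  hg.deriv_of_isOpen isOpen_Ioi (by simp)

lemma contDiffOn_Zop {g : ℝ → ℝ} (hg : ContDiffOn ℝ (⊤ : ℕ∞) g (Ioi (-1))) :
    ContDiffOn ℝ (⊤ : ℕ∞) (Zop g) (Ioi (-1)) := by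
  unfold Zop
  exact (ContDiffOn.div contDiffOn_id (contDiffOn_const.add contDiffOn_id) mem_ne).mul
    (derivOn hg)

lemma contDiffOn_iter (f : ℝ → ℝ) (hf : ContDiffOn ℝ (⊤ : ℕ∞) f (Ioi (-1))) (j : ℕ) :
    ContDiffOn ℝ (⊤ : ℕ∞) ((Zop^[j]) f) (Ioi (-1)) := by
  induction j with
  | zero => simpa using hf
  | succ j ih => rw [Function.iterate_succ_apply']; exact contDiffOn_Zop ih

lemma deriv_Zop {g : ℝ → ℝ} (hg : ContDiffOn ℝ (⊤ : ℕ∞) g (Ioi (-1)))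
    {z : ℝ} (hz : z ∈ Ioi (-1:ℝ)) :
    deriv (Zop g) z = (1 / (1 + z)) ^ 2 * deriv g z + (z / (1 + z)) * deriv (deriv g) z := by
  have hne := mem_ne z hz
  have h1 := hasDerivAt_phi z hne
  have h2 : HasDerivAt (deriv g) (deriv (deriv g) z) z :=
    (diffAt_of_cdOn (derivOn hg) hz).hasDerivAt
  exact (h1.mul h2).deriv

lemma key (f : ℝ → ℝ) (hf : ContDiff ℝ (⊤ : ℕ∞) f) (k : ℕ) :
    ∀ z ∈ Ioi (-1:ℝ),
      (Zop^[k]) (deriv f) z =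
        ∑ j ∈ Finset.range (k + 1), cf k j z * deriv ((Zop^[j]) f) z := by
  have hfo : ContDiffOn ℝ (⊤ : ℕ∞) f (Ioi (-1)) := hf.contDiffOn
  have hdf : ContDiffOn ℝ (⊤ : ℕ∞) (deriv f) (Ioi (-1)) := derivOn hfo
  induction k with
  | zero =>
      intro z hz
      simp [cf, Pc]
  | succ k ih =>
      intro z hz
      have hne := mem_ne z hz
      set u : ℝ := 1 / (1 + z) with hu
      -- differentiability of each summand
      have hdiffA : ∀ j ∈ Finset.range (k + 1),
          DifferentiableAt ℝ (fun w => cf k j w * deriv ((Zop^[j]) f) w) z := by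
        intro j _
        exact ((hasDerivAt_cf k j z hne).differentiableAt).mul
          (diffAt_of_cdOn (derivOn (contDiffOn_iter f hfo j)) hz)
      -- rewrite the iterate
      rw [Function.iterate_succ_apply']
      show (z / (1 + z)) * deriv ((Zop^[k]) (deriv f)) z = _
      have hEq : (Zop^[k]) (deriv f) =ᶠ[nhds z]
          (fun w => ∑ j ∈ Finset.range (k + 1), cf k j w * deriv ((Zop^[j]) f) w) :=
        Filter.eventuallyEq_of_mem (isOpen_Ioi.mem_nhds hz) (fun w hw => ih w hw)
      rw [hEq.deriv_eq, deriv_fun_sum hdiffA]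
      -- per-term derivative
      have hterm : ∀ j ∈ Finset.range (k + 1),
          deriv (fun w => cf k j w * deriv ((Zop^[j]) f) w) z =
            ((Pc k j).derivative.eval u * (-u ^ 2)) * deriv ((Zop^[j]) f) z +
              cf k j z * deriv (deriv ((Zop^[j]) f)) z := by
        intro j _
        have h1 := hasDerivAt_cf k j z hne
        have h2 : HasDerivAt (deriv ((Zop^[j]) f)) (deriv (deriv ((Zop^[j]) f)) z) z :=
          (diffAt_of_cdOn (derivOn (contDiffOn_iter f hfo j)) hz).hasDerivAt
        exact (h1.mul h2).deriv
      rw [Finset.sum_congr rfl hterm, Finset.mul_sum]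
      -- relation for second derivatives
      have hZd : ∀ j : ℕ, (z / (1 + z)) * deriv (deriv ((Zop^[j]) f)) z =
          deriv ((Zop^[j+1]) f) z - u ^ 2 * deriv ((Zop^[j]) f) z := by
        intro j
        rw [Function.iterate_succ_apply', deriv_Zop (contDiffOn_iter f hfo j) hz]
        ring
      -- LHS as a clean sum
      have hL : ∀ j ∈ Finset.range (k + 1),
          (z / (1 + z)) * (((Pc k j).derivative.eval u * (-u ^ 2)) * deriv ((Zop^[j]) f) z +
              cf k j z * deriv (deriv ((Zop^[j]) f)) z) =
            ((1 - u) * (-u ^ 2) * (Pc k j).derivative.eval u - u ^ 2 * (Pc k j).eval u) *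
                deriv ((Zop^[j]) f) z +
              (Pc k j).eval u * deriv ((Zop^[j+1]) f) z := by
        intro j _
        have := hZd j
        rw [phi_eq z hne] at this ⊢
        rw [← hu] at this ⊢
        calc (1 - u) * (((Pc k j).derivative.eval u * (-u ^ 2)) * deriv ((Zop^[j]) f) z +
                cf k j z * deriv (deriv ((Zop^[j]) f)) z)
            = (1 - u) * (((Pc k j).derivative.eval u * (-u ^ 2)) * deriv ((Zop^[j]) f) z) +
                (Pc k j).eval u * ((1 - u) * deriv (deriv ((Zop^[j]) f)) z) := by
              unfold cf; rw [← hu]; ring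
          _ = _ := by rw [this]; ring
      rw [Finset.sum_congr rfl hL]
      -- now expand the RHS coefficients
      have hR : ∀ j, cf (k+1) j z =
          ((1 - u) * (-u ^ 2) * (Pc k j).derivative.eval u - u ^ 2 * (Pc k j).eval u) +
            (if j = 0 then 0 else (Pc k (j-1)).eval u) := by
        intro j
        unfold cf
        rw [← hu]
        show ((1 - X) * (-X ^ 2) * derivative (Pc k j) - X ^ 2 * Pc k j +
          if j = 0 then 0 else Pc k (j - 1)).eval u = _
        rcases eq_or_ne j 0 with h | h <;>
          simp [h, eval_mul, eval_sub, eval_add, eval_pow]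
      have hRs : ∑ j ∈ Finset.range (k + 2), cf (k+1) j z * deriv ((Zop^[j]) f) z =
          ∑ j ∈ Finset.range (k + 2),
            (((1 - u) * (-u ^ 2) * (Pc k j).derivative.eval u - u ^ 2 * (Pc k j).eval u) +
              (if j = 0 then 0 else (Pc k (j-1)).eval u)) * deriv ((Zop^[j]) f) z :=
        Finset.sum_congr rfl (fun j _ => by rw [hR j])
      rw [hRs]
      simp only [add_mul, Finset.sum_add_distrib]
      congr 1
      · -- first parts: peel off the vanishing top term on the right
        conv_rhs => rw [Finset.sum_range_succ]
        rw [Pc_zero_of_lt k (k+1) (by omega)]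
        simp
      · -- shift the index in the second sum
        conv_rhs => rw [Finset.sum_range_succ']
        simp

/-- Lemma 2.2(i): for every `k` there are smooth bounded functions `c^k_{j,φ}` on `[0,∞)`,
`j = 0,…,k`, with `c^k_{k,φ} = 1`, such that
`(φ∂_z)^k (∂_z f) = Σ_{j=0}^k c^k_{j,φ} ∂_z (φ∂_z)^j f`. -/
theorem stmt2 (k : ℕ) :
    ∃ c : ℕ → ℝ → ℝ,
      (∀ j ≤ k, ContDiffOn ℝ (⊤ : ℕ∞) (c j) (Ici 0) ∧ ∃ M : ℝ, ∀ z ∈ Ici (0:ℝ), |c j z| ≤ M) ∧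
      (∀ z ∈ Ici (0:ℝ), c k z = 1) ∧
      (∀ f : ℝ → ℝ, ContDiff ℝ (⊤ : ℕ∞) f → ∀ z ∈ Ici (0:ℝ),
        (Zop^[k]) (deriv f) z =
          ∑ j ∈ Finset.range (k + 1), c j z * deriv ((Zop^[j]) f) z) := by
  have hsub : Ici (0:ℝ) ⊆ Ioi (-1:ℝ) := fun z hz => lt_of_lt_of_le (by norm_num : (-1:ℝ) < 0) hz
  refine ⟨fun j => cf k j, ?_, ?_, ?_⟩
  · intro j _
    constructor
    · exact (contDiffOn_cf k j).mono hsub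
    · obtain ⟨C, hC⟩ := (isCompact_Icc (a := (0:ℝ)) (b := 1)).exists_bound_of_continuousOn
        ((Pc k j).continuous_aeval.continuousOn)
      refine ⟨C, fun z hz => ?_⟩
      have h1 : (0:ℝ) < 1 + z := by simp only [mem_Ici] at hz; linarith
      have hmem : 1 / (1 + z) ∈ Icc (0:ℝ) 1 := by
        constructor
        · positivity
        · rw [div_le_one h1]; simp only [mem_Ici] at hz; linarith
      have := hC _ hmem
      simpa [cf, Real.norm_eq_abs] using this
  · intro z hz
    simp [cf, Pc_diag k]
  · intro f hf z hz
    exact key f hf k z (hsub hz)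
end

section
/- Let T ≤ 1, p > 5, s = 1/2 - 1/(2p), and let f ∈ C_c^∞(ℝ³ × ℝ). Then the boundary time-fractional seminorm satisfies [f]_{s,t,p}^p := ∫₀^T∫₀^T∫_{ℝ²} |f(x_h,0,θ) - f(x_h,0,τ)|^p / |θ-τ|^{1+ps} dx_h dθ dτ ≤ C ‖∂_z f‖_{L^p(ℝ³×(0,T))} ‖∂_t f‖_{L^p(ℝ³×(0,T))}^{p-1}, with C independent of f and T. -/
open MeasureTheory Set
open scoped ENNReal
open scoped Interval

set_option maxHeartbeats 1000000

/-- Points of `ℝ³` as `ℝ × ℝ × ℝ` (horizontal coordinates, then `z`). -/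
abbrev Pt : Type := ℝ × ℝ × ℝ

namespace Stmt15

variable {f : Pt × ℝ → ℝ}

lemma oRI {α : Type*} [MeasurableSpace α] (μ : Measure α) {h : α → ℝ}
    (h0 : 0 ≤ᵐ[μ] h) (hm : AEStronglyMeasurable h μ) :
    ENNReal.ofReal (∫ x, h x ∂μ) ≤ ∫⁻ x, ENNReal.ofReal (h x) ∂μ := by
  rw [integral_eq_lintegral_of_nonneg_ae h0 hm]
  exact ENNReal.ofReal_toReal_le

lemma holder_pow {α : Type*} [MeasurableSpace α] (μ : Measure α) {p : ℝ} (hp : 1 < p)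
    {φ : α → ℝ≥0∞} (hφ : AEMeasurable φ μ) :
    (∫⁻ x, φ x ∂μ) ^ p ≤ (∫⁻ x, (φ x) ^ p ∂μ) * (μ univ) ^ (p - 1) := by
  have hp0 : (0:ℝ) < p := by linarith
  have hq : p.HolderConjugate (p/(p-1)) := Real.HolderConjugate.conjExponent hp
  have h1 : ∫⁻ x, φ x ∂μ ≤ (∫⁻ x, (φ x) ^ p ∂μ) ^ (1/p) * (∫⁻ x, (1:ℝ≥0∞) ∂μ) ^ (1/(p/(p-1))) := by
    have := ENNReal.lintegral_mul_le_Lp_mul_Lq μ hq hφ (aemeasurable_const (b := (1:ℝ≥0∞)))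
    simpa using this
  calc (∫⁻ x, φ x ∂μ) ^ p
      ≤ ((∫⁻ x, (φ x) ^ p ∂μ) ^ (1/p) * (∫⁻ x, (1:ℝ≥0∞) ∂μ) ^ (1/(p/(p-1)))) ^ p :=
        ENNReal.rpow_le_rpow h1 hp0.le
    _ = (∫⁻ x, (φ x) ^ p ∂μ) * (μ univ) ^ (p - 1) := by
        rw [ENNReal.mul_rpow_of_nonneg _ _ hp0.le, ← ENNReal.rpow_mul, ← ENNReal.rpow_mul,
          lintegral_one]
        rw [one_div, inv_mul_cancel₀ hp0.ne', ENNReal.rpow_one]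
        congr 1
        field_simp

lemma add3_rpow (a b c : ℝ≥0∞) {p : ℝ} (hp : 1 ≤ p) :
    (a + b + c) ^ p ≤ 3 ^ (p-1) * (a ^ p + b ^ p + c ^ p) := by
  have h3 : (3:ℝ≥0∞)⁻¹ * 3 = 1 := ENNReal.inv_mul_cancel (by norm_num) (by norm_num)
  have key := ENNReal.rpow_arith_mean_le_arith_mean_rpow (Finset.univ : Finset (Fin 3))
    (fun _ => (3:ℝ≥0∞)⁻¹) (![3*a, 3*b, 3*c]) (by simp [Fin.sum_univ_three]; exact ENNReal.mul_inv_cancel (by norm_num) (by norm_num)) hp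
  simp only [Fin.sum_univ_three] at key
  have e1 : (3:ℝ≥0∞)⁻¹ * (3*a) + 3⁻¹ * (3*b) + 3⁻¹*(3*c) = a + b + c := by
    rw [← mul_assoc, ← mul_assoc, ← mul_assoc, h3, one_mul, one_mul, one_mul]
  simp only [Matrix.cons_val_zero, Matrix.cons_val_one, Matrix.head_cons, Matrix.cons_val_two, Matrix.tail_cons] at key
  rw [e1] at key
  refine key.trans (le_of_eq ?_)
  have hm : ∀ x : ℝ≥0∞, (3*x)^p = 3^p * x^p := fun x => ENNReal.mul_rpow_of_nonneg _ _ (by linarith)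
  have h3p : (3:ℝ≥0∞)⁻¹ * 3^p = 3^(p-1) := by
    rw [show p = 1 + (p-1) by ring, ENNReal.rpow_add _ _ (by norm_num) (by norm_num)]
    rw [ENNReal.rpow_one, ← mul_assoc, h3, one_mul]
    ring_nf
  rw [hm, hm, hm, ← mul_assoc, ← mul_assoc, ← mul_assoc, h3p]
  ring

lemma cont_D (hf : ContDiff ℝ (⊤ : ℕ∞) f) (v : Pt × ℝ) :
    Continuous (fun q => fderiv ℝ f q v) := by
  have h1 : Continuous (fderiv ℝ f) := hf.continuous_fderiv (by simp)
  exact h1.clm_apply continuous_const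

lemma hasDerivAt_z (hf : ContDiff ℝ (⊤ : ℕ∞) f) (x1 x2 t z : ℝ) :
    HasDerivAt (fun w => f ((x1, x2, w), t))
      (fderiv ℝ f ((x1, x2, z), t) ((0, 0, 1), 0)) z := by
  have hL : HasDerivAt (fun w : ℝ => (((x1, x2, w), t) : Pt × ℝ))
      (((0:ℝ), (0:ℝ), (1:ℝ)), (0:ℝ)) z :=
    (((hasDerivAt_const z x1).prodMk ((hasDerivAt_const z x2).prodMk (hasDerivAt_id z)))).prodMk
      (hasDerivAt_const z t)
  have hF : HasFDerivAt f (fderiv ℝ f ((x1, x2, z), t)) ((x1, x2, z), t) :=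
    (hf.differentiable (by simp) ((x1, x2, z), t)).hasFDerivAt
  exact hF.comp_hasDerivAt z hL

lemma hasDerivAt_t (hf : ContDiff ℝ (⊤ : ℕ∞) f) (x1 x2 z t : ℝ) :
    HasDerivAt (fun s => f ((x1, x2, z), s))
      (fderiv ℝ f ((x1, x2, z), t) ((0, 0, 0), 1)) t := by
  have hL : HasDerivAt (fun s : ℝ => (((x1, x2, z), s) : Pt × ℝ))
      (((0:ℝ), (0:ℝ), (0:ℝ)), (1:ℝ)) t :=
    (((hasDerivAt_const t x1).prodMk ((hasDerivAt_const t x2).prodMk (hasDerivAt_const t z)))).prodMk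
      (hasDerivAt_id t)
  have hF : HasFDerivAt f (fderiv ℝ f ((x1, x2, z), t)) ((x1, x2, z), t) :=
    (hf.differentiable (by simp) ((x1, x2, z), t)).hasFDerivAt
  exact hF.comp_hasDerivAt t hL

lemma ftc_t (hf : ContDiff ℝ (⊤ : ℕ∞) f) (x1 x2 z θ τ : ℝ) :
    f ((x1, x2, z), θ) - f ((x1, x2, z), τ)
      = ∫ σ in τ..θ, fderiv ℝ f ((x1, x2, z), σ) ((0, 0, 0), 1) := by
  rw [intervalIntegral.integral_eq_sub_of_hasDerivAt
    (fun s _ => hasDerivAt_t hf x1 x2 z s) ?_]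
  exact (Continuous.intervalIntegrable (by
    exact (cont_D hf _).comp (by fun_prop)) τ θ)

lemma ftc_z_deriv (hf : ContDiff ℝ (⊤ : ℕ∞) f) (x1 x2 θ τ : ℝ) {z δ : ℝ} (hz : z ∈ Ioc (0:ℝ) δ) :
    |(f ((x1, x2, 0), θ) - f ((x1, x2, 0), τ))|
      ≤ |f ((x1, x2, z), θ) - f ((x1, x2, z), τ)|
        + ∫ ζ in Ioc (0:ℝ) δ,
            (|fderiv ℝ f ((x1, x2, ζ), θ) ((0,0,1),0)| + |fderiv ℝ f ((x1, x2, ζ), τ) ((0,0,1),0)|) := by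
  set G : ℝ → ℝ := fun w => f ((x1, x2, w), θ) - f ((x1, x2, w), τ) with hG
  set G' : ℝ → ℝ := fun w => fderiv ℝ f ((x1, x2, w), θ) ((0,0,1),0)
      - fderiv ℝ f ((x1, x2, w), τ) ((0,0,1),0) with hG'
  have hd : ∀ w, HasDerivAt G (G' w) w := fun w =>
    (hasDerivAt_z hf x1 x2 θ w).sub (hasDerivAt_z hf x1 x2 τ w)
  have hcontG' : Continuous G' :=
    ((cont_D hf _).comp (by fun_prop)).sub ((cont_D hf _).comp (by fun_prop))
  have hftc : ∫ ζ in (0:ℝ)..z, G' ζ = G z - G 0 :=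
    intervalIntegral.integral_eq_sub_of_hasDerivAt (fun w _ => hd w)
      (hcontG'.intervalIntegrable 0 z)
  have h1 : |G 0| ≤ |G z| + |∫ ζ in (0:ℝ)..z, G' ζ| := by
    rw [hftc]; exact (abs_sub _ _).trans_eq' (by ring_nf)
  have h2 : |∫ ζ in (0:ℝ)..z, G' ζ| ≤ ∫ ζ in Ioc (0:ℝ) δ,
      (|fderiv ℝ f ((x1, x2, ζ), θ) ((0,0,1),0)| + |fderiv ℝ f ((x1, x2, ζ), τ) ((0,0,1),0)|) := by
    have h3 : |∫ ζ in (0:ℝ)..z, G' ζ| ≤ ∫ ζ in Ι (0:ℝ) z, |G' ζ| := by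
      simpa [Real.norm_eq_abs] using
        (intervalIntegral.norm_integral_le_integral_norm_uIoc (a := (0:ℝ)) (b := z) (f := G'))
    refine h3.trans ?_
    have hsub : Ι (0:ℝ) z ⊆ Ioc (0:ℝ) δ := by
      rw [uIoc_of_le hz.1.le]
      exact Ioc_subset_Ioc le_rfl hz.2
    have hint : IntegrableOn (fun ζ => |fderiv ℝ f ((x1, x2, ζ), θ) ((0,0,1),0)|
        + |fderiv ℝ f ((x1, x2, ζ), τ) ((0,0,1),0)|) (Ioc (0:ℝ) δ) := by
      refine Continuous.integrableOn_Ioc ?_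
      exact (((cont_D hf _).comp (by fun_prop)).abs).add (((cont_D hf _).comp (by fun_prop)).abs)
    calc ∫ ζ in Ι (0:ℝ) z, |G' ζ|
        ≤ ∫ ζ in Ι (0:ℝ) z, (|fderiv ℝ f ((x1, x2, ζ), θ) ((0,0,1),0)|
            + |fderiv ℝ f ((x1, x2, ζ), τ) ((0,0,1),0)|) := by
          refine setIntegral_mono_on (hcontG'.abs.integrableOn_uIoc) (hint.mono_set hsub)
            measurableSet_uIoc (fun ζ _ => abs_sub _ _)
      _ ≤ _ := setIntegral_mono_set hint
            (Filter.Eventually.of_forall fun ζ => by positivity)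
            (HasSubset.Subset.eventuallyLE hsub)
  calc |G 0| ≤ |G z| + |∫ ζ in (0:ℝ)..z, G' ζ| := h1
    _ ≤ _ := by exact add_le_add le_rfl h2

/-- averaged pointwise bound -/
lemma ptbound (hf : ContDiff ℝ (⊤ : ℕ∞) f) (x1 x2 θ τ : ℝ) {δ : ℝ} (hδ : 0 < δ) :
    |f ((x1, x2, 0), θ) - f ((x1, x2, 0), τ)|
      ≤ δ⁻¹ * (∫ z in Ioc (0:ℝ) δ, |f ((x1, x2, z), θ) - f ((x1, x2, z), τ)|)
        + ∫ ζ in Ioc (0:ℝ) δ,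
            (|fderiv ℝ f ((x1, x2, ζ), θ) ((0,0,1),0)| + |fderiv ℝ f ((x1, x2, ζ), τ) ((0,0,1),0)|) := by
  set C : ℝ := ∫ ζ in Ioc (0:ℝ) δ,
      (|fderiv ℝ f ((x1, x2, ζ), θ) ((0,0,1),0)| + |fderiv ℝ f ((x1, x2, ζ), τ) ((0,0,1),0)|) with hC
  have hmeas : MeasurableSet (Ioc (0:ℝ) δ) := measurableSet_Ioc
  have hvol : (volume (Ioc (0:ℝ) δ)).toReal = δ := by
    rw [Real.volume_Ioc, sub_zero, ENNReal.toReal_ofReal hδ.le]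
  have hintG : IntegrableOn (fun z => |f ((x1, x2, z), θ) - f ((x1, x2, z), τ)|)
      (Ioc (0:ℝ) δ) := by
    refine Continuous.integrableOn_Ioc ?_
    exact (((hf.continuous.comp (by fun_prop)).sub (hf.continuous.comp (by fun_prop)))).abs
  have key : δ * |f ((x1, x2, 0), θ) - f ((x1, x2, 0), τ)|
      ≤ (∫ z in Ioc (0:ℝ) δ, |f ((x1, x2, z), θ) - f ((x1, x2, z), τ)|) + δ * C := by
    have h1 : ∫ z in Ioc (0:ℝ) δ, |f ((x1, x2, 0), θ) - f ((x1, x2, 0), τ)|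
        = δ * |f ((x1, x2, 0), θ) - f ((x1, x2, 0), τ)| := by
      rw [setIntegral_const, measureReal_def, hvol, smul_eq_mul]
    have h2 : ∫ z in Ioc (0:ℝ) δ, (|f ((x1, x2, z), θ) - f ((x1, x2, z), τ)| + C)
        = (∫ z in Ioc (0:ℝ) δ, |f ((x1, x2, z), θ) - f ((x1, x2, z), τ)|) + δ * C := by
      rw [integral_add hintG (integrableOn_const (by
        rw [Real.volume_Ioc]; exact ENNReal.ofReal_ne_top))]
      rw [setIntegral_const, measureReal_def, hvol, smul_eq_mul]
    rw [← h1, ← h2]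
    refine setIntegral_mono_on (integrableOn_const (by
        rw [Real.volume_Ioc]; exact ENNReal.ofReal_ne_top))
      (hintG.add (integrableOn_const (by
        rw [Real.volume_Ioc]; exact ENNReal.ofReal_ne_top))) hmeas ?_
    intro z hz
    exact ftc_z_deriv hf x1 x2 θ τ hz
  have := mul_le_mul_of_nonneg_left key (le_of_lt (inv_pos.2 hδ))
  rw [← mul_assoc, inv_mul_cancel₀ hδ.ne', one_mul] at this
  refine this.trans (le_of_eq ?_)
  field_simp

lemma core_gen {p h lam : ℝ} (hp : 5 < p) (hh0 : 0 < h) (hh1 : h ≤ 1) (hlam : 0 < lam)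
    {G dθ dτ : ℝ → ℝ} {dt : ℝ → ℝ → ℝ} {I J : Set ℝ}
    (hGc : Continuous G) (hdθ : Continuous dθ) (hdτ : Continuous dτ)
    (hdt : Continuous (Function.uncurry dt))
    (hIJ : I ⊆ J)
    (hIvol : volume I = ENNReal.ofReal h)
    (hpt : |G 0| ≤ (lam*h)⁻¹ * (∫ z in Ioc (0:ℝ) (lam*h), |G z|)
        + ∫ ζ in Ioc (0:ℝ) (lam*h), (|dθ ζ| + |dτ ζ|))
    (hGz : ∀ z, |G z| ≤ ∫ σ in I, |dt z σ|) :
    ENNReal.ofReal (|G 0| ^ p / h ^ ((p+1)/2))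
      ≤ 3 ^ (p-1) * ((ENNReal.ofReal lam)⁻¹ * (∫⁻ z, ∫⁻ σ in J, ENNReal.ofReal (|dt z σ| ^ p))
          + (ENNReal.ofReal lam) ^ (p-1) *
            ((∫⁻ z, ENNReal.ofReal (|dθ z| ^ p)) + ∫⁻ z, ENNReal.ofReal (|dτ z| ^ p))) := by
  have hp0 : (0:ℝ) < p := by linarith
  have hp1 : (1:ℝ) < p := by linarith
  set Λ := ENNReal.ofReal lam with hΛdef
  set κ := ENNReal.ofReal h with hκdef
  have hδ : (0:ℝ) < lam * h := mul_pos hlam hh0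
  have hX : ENNReal.ofReal (lam * h) = Λ * κ := ENNReal.ofReal_mul hlam.le
  set u : ℝ → ℝ≥0∞ := fun z => ∫⁻ σ in I, ENNReal.ofReal |dt z σ| with hu
  have hum : Measurable u := by
    have h1 : Measurable (fun q : ℝ × ℝ => ENNReal.ofReal |dt q.1 q.2|) :=
      hdt.measurable.abs.ennreal_ofReal
    exact h1.lintegral_prod_right'
  set w : ℝ → ℝ≥0∞ := fun z => ∫⁻ σ in J, ENNReal.ofReal (|dt z σ| ^ p) with hw
  have hwm : Measurable w := by
    have h1 : Measurable (fun q : ℝ × ℝ => ENNReal.ofReal (|dt q.1 q.2| ^ p)) :=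
      ((hdt.abs.rpow_const (fun q => Or.inr hp0.le)).measurable).ennreal_ofReal
    exact h1.lintegral_prod_right'
  set W := ∫⁻ z, w z with hW
  set Vθ := ∫⁻ z, ENNReal.ofReal (|dθ z| ^ p) with hVθ
  set Vτ := ∫⁻ z, ENNReal.ofReal (|dτ z| ^ p) with hVτ
  set E := ENNReal.ofReal (|G 0|) with hE
  set U1 := (Λ * κ)⁻¹ * ∫⁻ z in Ioc (0:ℝ) (lam*h), u z with hU1
  set U2 := ∫⁻ z in Ioc (0:ℝ) (lam*h), ENNReal.ofReal (|dθ z|) with hU2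
  set U3 := ∫⁻ z in Ioc (0:ℝ) (lam*h), ENNReal.ofReal (|dτ z|) with hU3
  -- step 1 : E ≤ U1 + U2 + U3
  have s1 : E ≤ U1 + U2 + U3 := by
    have e1 : E ≤ ENNReal.ofReal ((lam*h)⁻¹ * ∫ z in Ioc (0:ℝ) (lam*h), |G z|)
        + ENNReal.ofReal (∫ ζ in Ioc (0:ℝ) (lam*h), (|dθ ζ| + |dτ ζ|)) :=
      le_trans (ENNReal.ofReal_le_ofReal hpt) ENNReal.ofReal_add_le
    have e2 : ENNReal.ofReal ((lam*h)⁻¹ * ∫ z in Ioc (0:ℝ) (lam*h), |G z|) ≤ U1 := by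
      rw [ENNReal.ofReal_mul (inv_nonneg.2 hδ.le), ENNReal.ofReal_inv_of_pos hδ, hX]
      refine mul_le_mul_right ?_ _
      refine le_trans (oRI _ (Filter.Eventually.of_forall fun z => abs_nonneg _)
        hGc.abs.aestronglyMeasurable.restrict) ?_
      refine lintegral_mono fun z => ?_
      refine le_trans (ENNReal.ofReal_le_ofReal (hGz z)) ?_
      exact oRI _ (Filter.Eventually.of_forall fun σ => abs_nonneg _)
        ((hdt.comp (Continuous.prodMk_right z)).abs.aestronglyMeasurable.restrict)
    have e3 : ENNReal.ofReal (∫ ζ in Ioc (0:ℝ) (lam*h), (|dθ ζ| + |dτ ζ|)) ≤ U2 + U3 := by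
      refine le_trans (oRI _ (Filter.Eventually.of_forall fun ζ => by positivity)
        ((hdθ.abs.add hdτ.abs).aestronglyMeasurable.restrict)) ?_
      have hc : ∀ ζ : ℝ, ENNReal.ofReal (|dθ ζ| + |dτ ζ|)
          = ENNReal.ofReal (|dθ ζ|) + ENNReal.ofReal (|dτ ζ|) :=
        fun ζ => ENNReal.ofReal_add (abs_nonneg _) (abs_nonneg _)
      rw [lintegral_congr hc, lintegral_add_left (hdθ.measurable.abs.ennreal_ofReal) _]
    exact le_trans e1 (le_trans (add_le_add e2 e3) (le_of_eq (add_assoc _ _ _).symm))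
  -- Hölder for the z-derivative terms
  have s3 : ∀ (dg : ℝ → ℝ), Continuous dg →
      (∫⁻ z in Ioc (0:ℝ) (lam*h), ENNReal.ofReal (|dg z|)) ^ p
        ≤ ENNReal.ofReal (lam^(p-1) * h^(p-1)) * ∫⁻ z, ENNReal.ofReal (|dg z| ^ p) := by
    intro dg hdg
    have h1 := holder_pow (volume.restrict (Ioc (0:ℝ) (lam*h))) hp1
      (φ := fun z => ENNReal.ofReal (|dg z|))
      (hdg.measurable.abs.ennreal_ofReal.aemeasurable)
    rw [Measure.restrict_apply_univ, Real.volume_Ioc, sub_zero] at h1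
    refine h1.trans ?_
    rw [mul_comm]
    refine mul_le_mul' ?_ ?_
    · rw [ENNReal.ofReal_rpow_of_pos hδ]
      exact le_of_eq (by rw [Real.mul_rpow hlam.le hh0.le])
    · refine le_trans (le_of_eq (lintegral_congr fun z => ?_)) (setLIntegral_le_lintegral _ _)
      exact ENNReal.ofReal_rpow_of_nonneg (abs_nonneg _) hp0.le
  -- Hölder for the time-derivative term
  have s2 : U1 ^ p ≤ ENNReal.ofReal (lam⁻¹ * h^(p-2)) * W := by
    rw [hU1, ENNReal.mul_rpow_of_nonneg _ _ hp0.le]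
    have h1 := holder_pow (volume.restrict (Ioc (0:ℝ) (lam*h))) hp1
      (φ := u) hum.aemeasurable
    rw [Measure.restrict_apply_univ, Real.volume_Ioc, sub_zero] at h1
    have h2 : ∀ z : ℝ, (u z) ^ p ≤ w z * κ ^ (p-1) := by
      intro z
      have h3 := holder_pow (volume.restrict I) hp1
        (φ := fun σ => ENNReal.ofReal (|dt z σ|))
        (((hdt.comp (Continuous.prodMk_right z)).abs.measurable.ennreal_ofReal).aemeasurable)
      rw [Measure.restrict_apply_univ, hIvol] at h3
      refine h3.trans ?_
      refine mul_le_mul' ?_ le_rfl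
      refine le_trans (le_of_eq (lintegral_congr fun σ =>
        ENNReal.ofReal_rpow_of_nonneg (abs_nonneg _) hp0.le)) ?_
      exact lintegral_mono_set hIJ
    have h4 : (∫⁻ z in Ioc (0:ℝ) (lam*h), u z) ^ p
        ≤ (∫⁻ z, w z) * κ ^ (p-1) * (ENNReal.ofReal (lam*h)) ^ (p-1) := by
      refine h1.trans ?_
      refine mul_le_mul' ?_ le_rfl
      calc ∫⁻ z in Ioc (0:ℝ) (lam*h), (u z) ^ p
          ≤ ∫⁻ z in Ioc (0:ℝ) (lam*h), w z * κ ^ (p-1) := lintegral_mono h2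
        _ = (∫⁻ z in Ioc (0:ℝ) (lam*h), w z) * κ ^ (p-1) := lintegral_mul_const _ hwm
        _ ≤ (∫⁻ z, w z) * κ ^ (p-1) := mul_le_mul' (setLIntegral_le_lintegral _ _) le_rfl
    refine le_trans (mul_le_mul' le_rfl h4) (le_of_eq ?_)
    have hcoef : ((Λ*κ)⁻¹) ^ p * (κ ^ (p-1) * (ENNReal.ofReal (lam*h)) ^ (p-1))
        = ENNReal.ofReal (lam⁻¹ * h^(p-2)) := by
      rw [← hX, hκdef, ← ENNReal.ofReal_inv_of_pos hδ, ENNReal.ofReal_rpow_of_pos (by positivity),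
        ENNReal.ofReal_rpow_of_pos hh0, ENNReal.ofReal_rpow_of_pos hδ,
        ← ENNReal.ofReal_mul (by positivity), ← ENNReal.ofReal_mul (by positivity)]
      congr 1
      rw [Real.inv_rpow hδ.le, ← Real.rpow_neg hδ.le]
      have key : (lam*h)^(-p) * (lam*h)^(p-1) = (lam*h)⁻¹ := by
        rw [← Real.rpow_add hδ, show -p + (p-1) = -1 by ring, Real.rpow_neg_one]
      calc (lam*h)^(-p) * (h^(p-1) * (lam*h)^(p-1))
          = ((lam*h)^(-p) * (lam*h)^(p-1)) * h^(p-1) := by ring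
        _ = (lam*h)⁻¹ * h^(p-1) := by rw [key]
        _ = lam⁻¹ * (h⁻¹ * h^(p-1)) := by rw [mul_inv]; ring
        _ = lam⁻¹ * h^(p-2) := by
            rw [← Real.rpow_neg_one h, ← Real.rpow_add hh0,
              show (-1) + (p-1) = p-2 by ring]
    calc ((Λ*κ)⁻¹)^p * ((∫⁻ z, w z) * κ ^ (p-1) * (ENNReal.ofReal (lam*h)) ^ (p-1))
        = ((Λ*κ)⁻¹)^p * (κ ^ (p-1) * (ENNReal.ofReal (lam*h)) ^ (p-1)) * (∫⁻ z, w z) := by ring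
      _ = ENNReal.ofReal (lam⁻¹ * h^(p-2)) * W := by rw [hcoef]
  -- final assembly
  have hEp : ENNReal.ofReal (|G 0| ^ p / h ^ ((p+1)/2))
      = E ^ p * ENNReal.ofReal ((h ^ ((p+1)/2))⁻¹) := by
    rw [div_eq_mul_inv, ENNReal.ofReal_mul (by positivity), hE,
      ENNReal.ofReal_rpow_of_nonneg (abs_nonneg _) hp0.le]
  set c := ENNReal.ofReal ((h ^ ((p+1)/2))⁻¹) with hcdef
  have hsum : E ^ p ≤ 3 ^ (p-1) * (U1 ^ p + U2 ^ p + U3 ^ p) :=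
    le_trans (ENNReal.rpow_le_rpow s1 hp0.le) (add3_rpow _ _ _ hp1.le)
  have c1 : ENNReal.ofReal (lam⁻¹ * h^(p-2)) * c ≤ Λ⁻¹ := by
    rw [hcdef, ← ENNReal.ofReal_mul (by positivity), hΛdef, ← ENNReal.ofReal_inv_of_pos hlam]
    apply ENNReal.ofReal_le_ofReal
    rw [mul_assoc, show h^(p-2) * (h^((p+1)/2))⁻¹ = h^((p-5)/2) from by
      rw [← Real.rpow_neg hh0.le, ← Real.rpow_add hh0]; congr 1; ring]
    exact mul_le_of_le_one_right (inv_nonneg.2 hlam.le)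
      (Real.rpow_le_one hh0.le hh1 (by linarith))
  have c2 : ENNReal.ofReal (lam^(p-1) * h^(p-1)) * c ≤ Λ ^ (p-1) := by
    rw [hcdef, ← ENNReal.ofReal_mul (by positivity), hΛdef, ENNReal.ofReal_rpow_of_pos hlam]
    apply ENNReal.ofReal_le_ofReal
    rw [mul_assoc, show h^(p-1) * (h^((p+1)/2))⁻¹ = h^((p-3)/2) from by
      rw [← Real.rpow_neg hh0.le, ← Real.rpow_add hh0]; congr 1; ring]
    exact mul_le_of_le_one_right (by positivity)
      (Real.rpow_le_one hh0.le hh1 (by linarith))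
  calc ENNReal.ofReal (|G 0| ^ p / h ^ ((p+1)/2)) = E ^ p * c := hEp
    _ ≤ (3 ^ (p-1) * (U1 ^ p + U2 ^ p + U3 ^ p)) * c := mul_le_mul_left hsum _
    _ = 3 ^ (p-1) * (U1 ^ p * c + U2 ^ p * c + U3 ^ p * c) := by ring
    _ ≤ 3 ^ (p-1) * (Λ⁻¹ * W + Λ ^ (p-1) * Vθ + Λ ^ (p-1) * Vτ) := by
        refine mul_le_mul_right (add_le_add (add_le_add ?_ ?_) ?_) _
        · calc U1 ^ p * c ≤ (ENNReal.ofReal (lam⁻¹ * h^(p-2)) * W) * c := mul_le_mul_left s2 _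
            _ = (ENNReal.ofReal (lam⁻¹ * h^(p-2)) * c) * W := by ring
            _ ≤ Λ⁻¹ * W := mul_le_mul_left c1 _
        · calc U2 ^ p * c ≤ (ENNReal.ofReal (lam^(p-1) * h^(p-1)) * Vθ) * c :=
              mul_le_mul_left (s3 dθ hdθ) _
            _ = (ENNReal.ofReal (lam^(p-1) * h^(p-1)) * c) * Vθ := by ring
            _ ≤ Λ ^ (p-1) * Vθ := mul_le_mul_left c2 _
        · calc U3 ^ p * c ≤ (ENNReal.ofReal (lam^(p-1) * h^(p-1)) * Vτ) * c :=
              mul_le_mul_left (s3 dτ hdτ) _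
            _ = (ENNReal.ofReal (lam^(p-1) * h^(p-1)) * c) * Vτ := by ring
            _ ≤ Λ ^ (p-1) * Vτ := mul_le_mul_left c2 _
    _ = 3 ^ (p-1) * (Λ⁻¹ * W + Λ ^ (p-1) * (Vθ + Vτ)) := by ring
    _ = 3 ^ (p-1) * ((ENNReal.ofReal lam)⁻¹ * (∫⁻ z, ∫⁻ σ in J, ENNReal.ofReal (|dt z σ| ^ p))
          + (ENNReal.ofReal lam) ^ (p-1) *
            ((∫⁻ z, ENNReal.ofReal (|dθ z| ^ p)) + ∫⁻ z, ENNReal.ofReal (|dτ z| ^ p))) := by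
        simp only [hW, hw, hΛdef, hVθ, hVτ]

noncomputable def WW (f : Pt × ℝ → ℝ) (p T : ℝ) : ℝ≥0∞ :=
  ∫⁻ xh : ℝ × ℝ, ∫⁻ z, ∫⁻ σ in Ioo (0:ℝ) T,
    ENNReal.ofReal (|fderiv ℝ f ((xh.1, xh.2, z), σ) ((0,0,0),1)| ^ p)

noncomputable def aa (f : Pt × ℝ → ℝ) (p t : ℝ) : ℝ≥0∞ :=
  ∫⁻ xh : ℝ × ℝ, ∫⁻ z, ENNReal.ofReal (|fderiv ℝ f ((xh.1, xh.2, z), t) ((0,0,1),0)| ^ p)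

lemma step_xh (hf : ContDiff ℝ (⊤ : ℕ∞) f) {p : ℝ} (hp : 5 < p) {T : ℝ} (hT1 : T ≤ 1)
    {θ τ : ℝ} (hθ : θ ∈ Ioo (0:ℝ) T) (hτ : τ ∈ Ioo (0:ℝ) T) {lam : ℝ} (hlam : 0 < lam) :
    ENNReal.ofReal (∫ xh : ℝ × ℝ,
        |f ((xh.1, xh.2, 0), θ) - f ((xh.1, xh.2, 0), τ)| ^ p / |θ - τ| ^ ((p+1)/2))
      ≤ (3:ℝ≥0∞) ^ (p-1) * ((ENNReal.ofReal lam)⁻¹ * WW f p T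
          + (ENNReal.ofReal lam) ^ (p-1) * (aa f p θ + aa f p τ)) := by
  have hp0 : (0:ℝ) < p := by linarith
  rcases eq_or_ne θ τ with rfl | hne
  · simp [Real.zero_rpow hp0.ne']
  have hh0 : 0 < |θ - τ| := abs_pos.2 (sub_ne_zero.2 hne)
  have hh1 : |θ - τ| ≤ 1 := by
    rw [abs_sub_le_iff]
    constructor <;> [linarith [hθ.2, hτ.1]; linarith [hτ.2, hθ.1] ]
  -- continuity facts
  have hgz : Continuous (fun q : Pt × ℝ => fderiv ℝ f q ((0,0,1),0)) := cont_D hf _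
  have hgt : Continuous (fun q : Pt × ℝ => fderiv ℝ f q ((0,0,0),1)) := cont_D hf _
  -- per xh bound from core_gen
  have hcore : ∀ xh : ℝ × ℝ,
      ENNReal.ofReal (|f ((xh.1, xh.2, 0), θ) - f ((xh.1, xh.2, 0), τ)| ^ p / |θ - τ| ^ ((p+1)/2))
        ≤ (3:ℝ≥0∞) ^ (p-1) * ((ENNReal.ofReal lam)⁻¹ *
            (∫⁻ z, ∫⁻ σ in Ioo (0:ℝ) T,
              ENNReal.ofReal (|fderiv ℝ f ((xh.1, xh.2, z), σ) ((0,0,0),1)| ^ p))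
          + (ENNReal.ofReal lam) ^ (p-1) *
            ((∫⁻ z, ENNReal.ofReal (|fderiv ℝ f ((xh.1, xh.2, z), θ) ((0,0,1),0)| ^ p))
              + ∫⁻ z, ENNReal.ofReal (|fderiv ℝ f ((xh.1, xh.2, z), τ) ((0,0,1),0)| ^ p))) := by
    intro xh
    refine core_gen hp hh0 hh1 hlam
      (G := fun z => f ((xh.1, xh.2, z), θ) - f ((xh.1, xh.2, z), τ))
      (dθ := fun ζ => fderiv ℝ f ((xh.1, xh.2, ζ), θ) ((0,0,1),0))
      (dτ := fun ζ => fderiv ℝ f ((xh.1, xh.2, ζ), τ) ((0,0,1),0))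
      (dt := fun z σ => fderiv ℝ f ((xh.1, xh.2, z), σ) ((0,0,0),1))
      (I := Ι τ θ) (J := Ioo (0:ℝ) T)
      ((hf.continuous.comp (by fun_prop)).sub (hf.continuous.comp (by fun_prop)))
      (hgz.comp (by fun_prop)) (hgz.comp (by fun_prop)) (hgt.comp (by fun_prop))
      ?_ ?_ (ptbound hf xh.1 xh.2 θ τ (mul_pos hlam hh0)) ?_
    · intro x hx
      obtain ⟨h1, h2⟩ := hx
      constructor
      · exact lt_trans (lt_inf_iff.2 ⟨hτ.1, hθ.1⟩) h1
      · exact lt_of_le_of_lt h2 (sup_lt_iff.2 ⟨hτ.2, hθ.2⟩)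
    · show volume (Ioc (τ ⊓ θ) (τ ⊔ θ)) = ENNReal.ofReal |θ - τ|
      rw [Real.volume_Ioc, max_sub_min_eq_abs, abs_sub_comm]
    · intro z
      show |f ((xh.1, xh.2, z), θ) - f ((xh.1, xh.2, z), τ)|
        ≤ ∫ σ in Ι τ θ, |fderiv ℝ f ((xh.1, xh.2, z), σ) ((0,0,0),1)|
      rw [ftc_t hf xh.1 xh.2 z θ τ]
      simpa [Real.norm_eq_abs] using
        (intervalIntegral.norm_integral_le_integral_norm_uIoc (a := τ) (b := θ)
          (f := fun σ => fderiv ℝ f ((xh.1, xh.2, z), σ) ((0,0,0),1)))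
  -- measurability
  have hc1 : Continuous (fun q : ((ℝ × ℝ) × ℝ) × ℝ =>
      (((q.1.1.1, q.1.1.2, q.1.2), q.2) : Pt × ℝ)) := by fun_prop
  have hmt : Measurable (fun q : ((ℝ × ℝ) × ℝ) × ℝ =>
      ENNReal.ofReal (|fderiv ℝ f ((q.1.1.1, q.1.1.2, q.1.2), q.2) ((0,0,0),1)| ^ p)) :=
    (((hgt.comp hc1).abs.rpow_const (fun _ => Or.inr hp0.le)).measurable).ennreal_ofReal
  have hw1m : Measurable (fun xh : ℝ × ℝ => ∫⁻ z, ∫⁻ σ in Ioo (0:ℝ) T,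
      ENNReal.ofReal (|fderiv ℝ f ((xh.1, xh.2, z), σ) ((0,0,0),1)| ^ p)) := by
    have h2 : Measurable (fun q : (ℝ × ℝ) × ℝ => ∫⁻ σ in Ioo (0:ℝ) T,
        ENNReal.ofReal (|fderiv ℝ f ((q.1.1, q.1.2, q.2), σ) ((0,0,0),1)| ^ p)) :=
      hmt.lintegral_prod_right'
    exact h2.lintegral_prod_right'
  have hvm : ∀ t : ℝ, Measurable (fun xh : ℝ × ℝ => ∫⁻ z,
      ENNReal.ofReal (|fderiv ℝ f ((xh.1, xh.2, z), t) ((0,0,1),0)| ^ p)) := by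
    intro t
    have hc2 : Continuous (fun q : (ℝ × ℝ) × ℝ => (((q.1.1, q.1.2, q.2), t) : Pt × ℝ)) := by
      fun_prop
    exact ((((hgz.comp hc2).abs.rpow_const
      (fun _ => Or.inr hp0.le)).measurable).ennreal_ofReal).lintegral_prod_right'
  -- assemble
  refine le_trans (oRI _ (Filter.Eventually.of_forall fun xh => by positivity) ?_) ?_
  · refine Continuous.aestronglyMeasurable ?_
    refine Continuous.div_const ?_ _
    exact ((hf.continuous.comp (by fun_prop)).sub (hf.continuous.comp (by fun_prop))).abs.rpow_const
      (fun _ => Or.inr hp0.le)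
  refine le_trans (lintegral_mono hcore) (le_of_eq ?_)
  rw [lintegral_const_mul _ (by
    exact ((hw1m.const_mul _).add (((hvm θ).add (hvm τ)).const_mul _)))]
  congr 1
  rw [lintegral_add_left (hw1m.const_mul _)]
  congr 1
  · exact lintegral_const_mul _ hw1m
  · rw [lintegral_const_mul _ (f := fun xh : ℝ × ℝ =>
      (∫⁻ z, ENNReal.ofReal (|fderiv ℝ f ((xh.1, xh.2, z), θ) ((0,0,1),0)| ^ p))
        + ∫⁻ z, ENNReal.ofReal (|fderiv ℝ f ((xh.1, xh.2, z), τ) ((0,0,1),0)| ^ p))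
      ((hvm θ).add (hvm τ)), lintegral_add_left (hvm θ)]
    rfl

lemma lint_Pt (g : Pt → ℝ≥0∞) (hg : Measurable g) :
    ∫⁻ x : Pt, g x = ∫⁻ xh : ℝ × ℝ, ∫⁻ z, g (xh.1, xh.2, z) := by
  have hre : Measurable fun q : (ℝ × ℝ) × ℝ => ((q.1.1, q.1.2, q.2) : Pt) := by fun_prop
  rw [show (volume : Measure Pt) = (volume : Measure ℝ).prod (volume : Measure (ℝ × ℝ))
      from rfl]
  rw [lintegral_prod _ hg.aemeasurable]
  rw [show (volume : Measure (ℝ × ℝ)) = (volume : Measure ℝ).prod (volume : Measure ℝ)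
      from rfl]
  rw [lintegral_prod (fun xh : ℝ × ℝ => ∫⁻ z, g (xh.1, xh.2, z)) (by
    have h2 : Measurable fun xh : ℝ × ℝ => ∫⁻ z, g (xh.1, xh.2, z) :=
      (hg.comp hre).lintegral_prod_right'
    exact h2.aemeasurable)]
  refine lintegral_congr fun x1 => ?_
  rw [lintegral_prod (fun v : ℝ × ℝ => g (x1, v))
    ((hg.comp (measurable_const.prodMk measurable_id)).aemeasurable)]

lemma slab_eq (T : ℝ) :
    {q : Pt × ℝ | 0 < q.2 ∧ q.2 < T} = (univ : Set Pt) ×ˢ Ioo (0:ℝ) T := by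
  ext q; simp [Set.mem_prod, mem_Ioo]

lemma slab_lint (T : ℝ) (g : Pt × ℝ → ℝ≥0∞) (hg : Measurable g) :
    ∫⁻ q in {q : Pt × ℝ | 0 < q.2 ∧ q.2 < T}, g q
      = ∫⁻ t in Ioo (0:ℝ) T, ∫⁻ xh : ℝ × ℝ, ∫⁻ z, g ((xh.1, xh.2, z), t) := by
  rw [slab_eq, show (volume : Measure (Pt × ℝ)) = (volume : Measure Pt).prod (volume : Measure ℝ)
      from rfl, ← Measure.prod_restrict, Measure.restrict_univ]
  rw [lintegral_prod _ hg.aemeasurable]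
  rw [lintegral_lintegral_swap (f := fun x t => g (x, t))
    ((hg.comp (measurable_fst.prodMk measurable_snd)).aemeasurable)]
  exact lintegral_congr fun t => lint_Pt _ (hg.comp measurable_prodMk_right)

-- real work below
lemma master (hf : ContDiff ℝ (⊤ : ℕ∞) f) (hsupp : HasCompactSupport f) {p : ℝ} (hp : 5 < p)
    {T : ℝ} (hT0 : 0 < T) (hT1 : T ≤ 1) {lam : ℝ} (hlam : 0 < lam) :
    (∫ θ in Ioo (0:ℝ) T, ∫ τ in Ioo (0:ℝ) T, ∫ xh : ℝ × ℝ,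
        |f ((xh.1, xh.2, 0), θ) - f ((xh.1, xh.2, 0), τ)| ^ p
          / |θ - τ| ^ (1 + p * (1/2 - 1/(2*p))))
      ≤ 3 ^ (p-1) * (lam⁻¹ * (∫ q in {q : Pt × ℝ | 0 < q.2 ∧ q.2 < T},
            |fderiv ℝ f q ((0, 0, 0), 1)| ^ p)
          + 2 * lam ^ (p-1) * (∫ q in {q : Pt × ℝ | 0 < q.2 ∧ q.2 < T},
            |fderiv ℝ f q ((0, 0, 1), 0)| ^ p)) := by
  have hp0 : (0:ℝ) < p := by linarith
  have hp1 : (1:ℝ) < p := by linarith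
  simp only [show (1 + p * (1/2 - 1/(2*p))) = (p+1)/2 from by field_simp; ring]
  set gz : Pt × ℝ → ℝ := fun q => |fderiv ℝ f q ((0,0,1),0)| ^ p with hgz
  set gt : Pt × ℝ → ℝ := fun q => |fderiv ℝ f q ((0,0,0),1)| ^ p with hgt
  have hgzc : Continuous gz := ((cont_D hf _).abs).rpow_const (fun _ => Or.inr hp0.le)
  have hgtc : Continuous gt := ((cont_D hf _).abs).rpow_const (fun _ => Or.inr hp0.le)
  have hgzs : HasCompactSupport gz := by
    have h1 : HasCompactSupport (fderiv ℝ f) := hsupp.fderiv ℝ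
    exact h1.comp_left (g := fun L : (Pt × ℝ) →L[ℝ] ℝ => |L ((0,0,1),0)| ^ p)
      (by simp [Real.zero_rpow hp0.ne'])
  have hgts : HasCompactSupport gt := by
    have h1 : HasCompactSupport (fderiv ℝ f) := hsupp.fderiv ℝ
    exact h1.comp_left (g := fun L : (Pt × ℝ) →L[ℝ] ℝ => |L ((0,0,0),1)| ^ p)
      (by simp [Real.zero_rpow hp0.ne'])
  set A := ∫ q in {q : Pt × ℝ | 0 < q.2 ∧ q.2 < T}, gz q with hA
  set B := ∫ q in {q : Pt × ℝ | 0 < q.2 ∧ q.2 < T}, gt q with hB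
  have hA0 : 0 ≤ A := integral_nonneg fun q => by positivity
  have hB0 : 0 ≤ B := integral_nonneg fun q => by positivity
  -- identifications
  have hAind : ∫⁻ t in Ioo (0:ℝ) T, aa f p t = ENNReal.ofReal A := by
    rw [hA, ofReal_integral_eq_lintegral_ofReal
      ((hgzc.integrable_of_hasCompactSupport hgzs).restrict)
      (Filter.Eventually.of_forall fun q => by positivity)]
    rw [slab_lint T _ hgzc.measurable.ennreal_ofReal]
    exact lintegral_congr fun t => rfl
  have hBind : WW f p T = ENNReal.ofReal B := by
    rw [hB, ofReal_integral_eq_lintegral_ofReal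
      ((hgtc.integrable_of_hasCompactSupport hgts).restrict)
      (Filter.Eventually.of_forall fun q => by positivity)]
    rw [slab_lint T _ hgtc.measurable.ennreal_ofReal]
    have e1 : ∀ xh : ℝ × ℝ,
        (∫⁻ z, ∫⁻ σ in Ioo (0:ℝ) T, ENNReal.ofReal (gt ((xh.1, xh.2, z), σ)))
          = ∫⁻ σ in Ioo (0:ℝ) T, ∫⁻ z, ENNReal.ofReal (gt ((xh.1, xh.2, z), σ)) := by
      intro xh
      refine lintegral_lintegral_swap ?_
      have hc : Continuous fun q : ℝ × ℝ => (((xh.1, xh.2, q.1), q.2) : Pt × ℝ) := by fun_prop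
      exact ((hgtc.comp hc).measurable).ennreal_ofReal.aemeasurable
    have e2 : WW f p T = ∫⁻ xh : ℝ × ℝ, ∫⁻ σ in Ioo (0:ℝ) T, ∫⁻ z,
        ENNReal.ofReal (gt ((xh.1, xh.2, z), σ)) := lintegral_congr e1
    rw [e2]
    refine lintegral_lintegral_swap ?_
    have hc2 : Continuous fun q : ((ℝ × ℝ) × ℝ) × ℝ =>
        (((q.1.1.1, q.1.1.2, q.2), q.1.2) : Pt × ℝ) := by fun_prop
    have hm2 : Measurable fun q : ((ℝ × ℝ) × ℝ) × ℝ =>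
        ENNReal.ofReal (gt ((q.1.1.1, q.1.1.2, q.2), q.1.2)) :=
      ((hgtc.comp hc2).measurable).ennreal_ofReal
    exact hm2.lintegral_prod_right'.aemeasurable
  -- measurability of aa
  have haam : Measurable (aa f p) := by
    have hc3 : Continuous fun q : (ℝ × (ℝ × ℝ)) × ℝ =>
        (((q.1.2.1, q.1.2.2, q.2), q.1.1) : Pt × ℝ) := by fun_prop
    have hm3 : Measurable fun q : ℝ × (ℝ × ℝ) => ∫⁻ z,
        ENNReal.ofReal (gz ((q.2.1, q.2.2, z), q.1)) :=
      (((hgzc.comp hc3).measurable).ennreal_ofReal).lintegral_prod_right'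
    exact hm3.lintegral_prod_right'
  -- strong measurability of the Bochner layers
  have hnum2 : Continuous fun w : (ℝ × ℝ) × (ℝ × ℝ) =>
      |f ((w.2.1, w.2.2, 0), w.1.1) - f ((w.2.1, w.2.2, 0), w.1.2)| ^ p :=
    ((hf.continuous.comp (by fun_prop)).sub (hf.continuous.comp (by fun_prop))).abs.rpow_const
      (fun _ => Or.inr hp0.le)
  have hden2 : Continuous fun w : (ℝ × ℝ) × (ℝ × ℝ) => |w.1.1 - w.1.2| ^ ((p+1)/2) :=
    ((continuous_fst.fst.sub continuous_fst.snd).abs).rpow_const (fun _ => Or.inr (by positivity))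
  have hF3 : Measurable fun w : (ℝ × ℝ) × (ℝ × ℝ) =>
      |f ((w.2.1, w.2.2, 0), w.1.1) - f ((w.2.1, w.2.2, 0), w.1.2)| ^ p
        / |w.1.1 - w.1.2| ^ ((p+1)/2) := hnum2.measurable.div hden2.measurable
  have hSMin : StronglyMeasurable fun w : ℝ × ℝ => ∫ xh : ℝ × ℝ,
      |f ((xh.1, xh.2, 0), w.1) - f ((xh.1, xh.2, 0), w.2)| ^ p
        / |w.1 - w.2| ^ ((p+1)/2) :=
    hF3.stronglyMeasurable.integral_prod_right'
  have hSM1 : ∀ θ : ℝ, AEStronglyMeasurable (fun τ => ∫ xh : ℝ × ℝ,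
      |f ((xh.1, xh.2, 0), θ) - f ((xh.1, xh.2, 0), τ)| ^ p
        / |θ - τ| ^ ((p+1)/2)) (volume.restrict (Ioo (0:ℝ) T)) := by
    intro θ
    exact ((hSMin.comp_measurable (measurable_const.prodMk measurable_id)
      : StronglyMeasurable fun τ : ℝ => _)).aestronglyMeasurable
  have hSM2 : AEStronglyMeasurable (fun θ => ∫ τ in Ioo (0:ℝ) T, ∫ xh : ℝ × ℝ,
      |f ((xh.1, xh.2, 0), θ) - f ((xh.1, xh.2, 0), τ)| ^ p
        / |θ - τ| ^ ((p+1)/2)) (volume.restrict (Ioo (0:ℝ) T)) :=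
    (hSMin.integral_prod_right').aestronglyMeasurable
  -- nonnegativity
  have hψ0 : ∀ θ τ : ℝ, 0 ≤ ∫ xh : ℝ × ℝ,
      |f ((xh.1, xh.2, 0), θ) - f ((xh.1, xh.2, 0), τ)| ^ p / |θ - τ| ^ ((p+1)/2) :=
    fun θ τ => integral_nonneg fun xh => by positivity
  -- constants
  set K := (3:ℝ≥0∞) ^ (p-1) with hK
  set Λ := ENNReal.ofReal lam with hΛ
  set C2 := K * Λ ^ (p-1) with hC2
  set Aint := ∫⁻ t in Ioo (0:ℝ) T, aa f p t with hAint
  have hμT : volume (Ioo (0:ℝ) T) ≤ 1 := by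
    rw [Real.volume_Ioo, sub_zero]
    exact ENNReal.ofReal_le_one.2 hT1
  -- per-θ estimate
  have cθ : ∀ θ ∈ Ioo (0:ℝ) T,
      (∫⁻ τ in Ioo (0:ℝ) T, ENNReal.ofReal (∫ xh : ℝ × ℝ,
        |f ((xh.1, xh.2, 0), θ) - f ((xh.1, xh.2, 0), τ)| ^ p / |θ - τ| ^ ((p+1)/2)))
      ≤ K * Λ⁻¹ * WW f p T + C2 * aa f p θ + C2 * Aint := by
    intro θ hθ
    have b1 : (∫⁻ τ in Ioo (0:ℝ) T, ENNReal.ofReal (∫ xh : ℝ × ℝ,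
        |f ((xh.1, xh.2, 0), θ) - f ((xh.1, xh.2, 0), τ)| ^ p / |θ - τ| ^ ((p+1)/2)))
        ≤ ∫⁻ τ in Ioo (0:ℝ) T,
            ((K * (Λ⁻¹ * WW f p T + Λ ^ (p-1) * aa f p θ)) + C2 * aa f p τ) := by
      refine setLIntegral_mono (by exact measurable_const.add (haam.const_mul _)) ?_
      intro τ hτ
      refine le_trans (step_xh hf hp hT1 hθ hτ hlam) (le_of_eq ?_)
      rw [hC2, hK, hΛ]; ring
    refine b1.trans ?_
    rw [lintegral_add_left measurable_const, setLIntegral_const,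
      lintegral_const_mul _ haam]
    have : (K * (Λ⁻¹ * WW f p T + Λ ^ (p-1) * aa f p θ)) * volume (Ioo (0:ℝ) T)
        ≤ K * (Λ⁻¹ * WW f p T + Λ ^ (p-1) * aa f p θ) := by
      calc _ ≤ (K * (Λ⁻¹ * WW f p T + Λ ^ (p-1) * aa f p θ)) * 1 := mul_le_mul_right hμT _
        _ = _ := mul_one _
    refine le_trans (add_le_add this le_rfl) (le_of_eq ?_)
    rw [hC2]; ring
  -- full estimate
  have key : ENNReal.ofReal (∫ θ in Ioo (0:ℝ) T, ∫ τ in Ioo (0:ℝ) T, ∫ xh : ℝ × ℝ,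
      |f ((xh.1, xh.2, 0), θ) - f ((xh.1, xh.2, 0), τ)| ^ p / |θ - τ| ^ ((p+1)/2))
      ≤ K * Λ⁻¹ * ENNReal.ofReal B + 2 * C2 * ENNReal.ofReal A := by
    refine le_trans (oRI _ (Filter.Eventually.of_forall fun θ =>
      integral_nonneg fun τ => hψ0 θ τ) hSM2) ?_
    have b2 : ∀ θ : ℝ, ENNReal.ofReal (∫ τ in Ioo (0:ℝ) T, ∫ xh : ℝ × ℝ,
        |f ((xh.1, xh.2, 0), θ) - f ((xh.1, xh.2, 0), τ)| ^ p / |θ - τ| ^ ((p+1)/2))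
        ≤ ∫⁻ τ in Ioo (0:ℝ) T, ENNReal.ofReal (∫ xh : ℝ × ℝ,
        |f ((xh.1, xh.2, 0), θ) - f ((xh.1, xh.2, 0), τ)| ^ p / |θ - τ| ^ ((p+1)/2)) :=
      fun θ => oRI _ (Filter.Eventually.of_forall fun τ => hψ0 θ τ) (hSM1 θ)
    refine le_trans (lintegral_mono b2) ?_
    have b3 : (∫⁻ θ in Ioo (0:ℝ) T, ∫⁻ τ in Ioo (0:ℝ) T, ENNReal.ofReal (∫ xh : ℝ × ℝ,
        |f ((xh.1, xh.2, 0), θ) - f ((xh.1, xh.2, 0), τ)| ^ p / |θ - τ| ^ ((p+1)/2)))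
        ≤ ∫⁻ θ in Ioo (0:ℝ) T,
            ((K * Λ⁻¹ * WW f p T + C2 * Aint) + C2 * aa f p θ) := by
      refine setLIntegral_mono (by exact measurable_const.add (haam.const_mul _)) ?_
      intro θ hθ
      refine le_trans (cθ θ hθ) (le_of_eq (by ring))
    refine b3.trans ?_
    rw [lintegral_add_left measurable_const, setLIntegral_const,
      lintegral_const_mul _ haam]
    have b4 : (K * Λ⁻¹ * WW f p T + C2 * Aint) * volume (Ioo (0:ℝ) T)
        ≤ K * Λ⁻¹ * WW f p T + C2 * Aint := by
      calc _ ≤ (K * Λ⁻¹ * WW f p T + C2 * Aint) * 1 := mul_le_mul_right hμT _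
        _ = _ := mul_one _
    refine le_trans (add_le_add b4 le_rfl) (le_of_eq ?_)
    rw [hBind, hAind.symm]
    ring
  -- back to the reals
  have hRHS0 : 0 ≤ 3 ^ (p-1) * (lam⁻¹ * B + 2 * lam ^ (p-1) * A) := by
    have h3 : (0:ℝ) ≤ 3 ^ (p-1) := Real.rpow_nonneg (by norm_num) _
    have h4 : (0:ℝ) ≤ lam⁻¹ * B := mul_nonneg (inv_nonneg.2 hlam.le) hB0
    have h5 : (0:ℝ) ≤ 2 * lam ^ (p-1) * A :=
      mul_nonneg (mul_nonneg (by norm_num) (Real.rpow_nonneg hlam.le _)) hA0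
    exact mul_nonneg h3 (by linarith)
  refine (ENNReal.ofReal_le_ofReal_iff hRHS0).1 (key.trans (le_of_eq ?_))
  rw [ENNReal.ofReal_mul (Real.rpow_nonneg (by norm_num) _),
    ENNReal.ofReal_add (mul_nonneg (inv_nonneg.2 hlam.le) hB0)
      (mul_nonneg (mul_nonneg (by norm_num) (Real.rpow_nonneg hlam.le _)) hA0),
    ENNReal.ofReal_mul (inv_nonneg.2 hlam.le),
    ENNReal.ofReal_mul (mul_nonneg (by norm_num) (Real.rpow_nonneg hlam.le _)),
    ENNReal.ofReal_mul (by norm_num : (0:ℝ) ≤ 2)]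
  rw [ENNReal.ofReal_inv_of_pos hlam, ← ENNReal.ofReal_rpow_of_pos hlam,
    ← ENNReal.ofReal_rpow_of_pos (by norm_num : (0:ℝ) < 3),
    ENNReal.ofReal_ofNat, ENNReal.ofReal_ofNat]
  rw [hK, hΛ, hC2, hK, hΛ]
  ring

end Stmt15

/-- Lemma 8.2 (trace-type inequality): for `T ≤ 1`, `p > 5`, `s = 1/2 - 1/(2p)` and
`f ∈ C_c^∞(ℝ³ × ℝ)`, the fractional-in-time seminorm of the boundary trace satisfies
`[f]_{s,t,p}^p ≤ C ‖∂_z f‖_{L^p(ℝ³×(0,T))} ‖∂_t f‖_{L^p(ℝ³×(0,T))}^{p-1}` with `C`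
independent of `f` and `T`. -/
theorem stmt15 (p : ℝ) (hp : 5 < p) :
    ∃ C : ℝ, 0 < C ∧
      ∀ T : ℝ, 0 < T → T ≤ 1 →
        ∀ f : Pt × ℝ → ℝ, ContDiff ℝ (⊤ : ℕ∞) f → HasCompactSupport f →
          (∫ θ in Ioo (0:ℝ) T, ∫ τ in Ioo (0:ℝ) T, ∫ xh : ℝ × ℝ,
              |f ((xh.1, xh.2, 0), θ) - f ((xh.1, xh.2, 0), τ)| ^ p
                / |θ - τ| ^ (1 + p * (1/2 - 1/(2*p))))
            ≤ C *
              (∫ q in {q : Pt × ℝ | 0 < q.2 ∧ q.2 < T},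
                  |fderiv ℝ f q ((0, 0, 1), 0)| ^ p) ^ (1/p) *
              ((∫ q in {q : Pt × ℝ | 0 < q.2 ∧ q.2 < T},
                  |fderiv ℝ f q ((0, 0, 0), 1)| ^ p) ^ (1/p)) ^ (p - 1) := by
  have hp0 : (0:ℝ) < p := by linarith
  have hp1 : (1:ℝ) < p := by linarith
  refine ⟨3 ^ p, Real.rpow_pos_of_pos (by norm_num) _, ?_⟩
  intro T hT0 hT1 f hf hsupp
  set A := ∫ q in {q : Pt × ℝ | 0 < q.2 ∧ q.2 < T}, |fderiv ℝ f q ((0, 0, 1), 0)| ^ p with hAdef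
  set B := ∫ q in {q : Pt × ℝ | 0 < q.2 ∧ q.2 < T}, |fderiv ℝ f q ((0, 0, 0), 1)| ^ p with hBdef
  have hA0 : 0 ≤ A := integral_nonneg fun q => by positivity
  have hB0 : 0 ≤ B := integral_nonneg fun q => by positivity
  have hmaster : ∀ lam : ℝ, 0 < lam →
      (∫ θ in Ioo (0:ℝ) T, ∫ τ in Ioo (0:ℝ) T, ∫ xh : ℝ × ℝ,
        |f ((xh.1, xh.2, 0), θ) - f ((xh.1, xh.2, 0), τ)| ^ p
          / |θ - τ| ^ (1 + p * (1/2 - 1/(2*p))))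
      ≤ 3 ^ (p-1) * (lam⁻¹ * B + 2 * lam ^ (p-1) * A) :=
    fun lam hlam => Stmt15.master hf hsupp hp hT0 hT1 hlam
  set L := ∫ θ in Ioo (0:ℝ) T, ∫ τ in Ioo (0:ℝ) T, ∫ xh : ℝ × ℝ,
      |f ((xh.1, xh.2, 0), θ) - f ((xh.1, xh.2, 0), τ)| ^ p
        / |θ - τ| ^ (1 + p * (1/2 - 1/(2*p))) with hLdef
  have h3 : (0:ℝ) < 3 ^ (p-1) := Real.rpow_pos_of_pos (by norm_num) _
  rcases eq_or_lt_of_le hA0 with hA | hA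
  · -- A = 0
    have hR : (3:ℝ) ^ p * A ^ (1/p) * (B ^ (1/p)) ^ (p-1) = 0 := by
      rw [← hA, Real.zero_rpow (one_div_ne_zero hp0.ne')]
      ring
    rw [hR]
    refine le_of_forall_pos_le_add fun ε hε => ?_
    rw [zero_add]
    rcases eq_or_lt_of_le hB0 with hB | hB
    · have h1 := hmaster 1 one_pos
      rw [← hA, ← hB] at h1
      refine h1.trans ?_
      rw [show (3:ℝ)^(p-1) * (1⁻¹ * 0 + 2 * 1^(p-1) * 0) = 0 by ring]
      exact hε.le
    · have hlam : (0:ℝ) < 3^(p-1) * B / ε := by positivity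
      have h1 := hmaster _ hlam
      rw [← hA] at h1
      refine h1.trans (le_of_eq ?_)
      field_simp
      ring
  rcases eq_or_lt_of_le hB0 with hB | hB
  · -- B = 0, A > 0
    have hR : (3:ℝ) ^ p * A ^ (1/p) * (B ^ (1/p)) ^ (p-1) = 0 := by
      rw [← hB, Real.zero_rpow (one_div_ne_zero hp0.ne'),
        Real.zero_rpow (by linarith : p - 1 ≠ 0)]
      ring
    rw [hR]
    refine le_of_forall_pos_le_add fun ε hε => ?_
    rw [zero_add]
    set x := ε / (2 * 3^(p-1) * A) with hxdef
    have hx : (0:ℝ) < x := by positivity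
    have hlam : (0:ℝ) < x ^ (1/(p-1)) := Real.rpow_pos_of_pos hx _
    have h1 := hmaster _ hlam
    rw [← hB] at h1
    refine h1.trans (le_of_eq ?_)
    have hpow : (x ^ (1/(p-1))) ^ (p-1) = x := by
      rw [← Real.rpow_mul hx.le, one_div, inv_mul_cancel₀ (by linarith : p - 1 ≠ 0),
        Real.rpow_one]
    rw [hpow, hxdef]
    field_simp
    ring
  · -- main case
    set a := A ^ (1/p) with hadef
    set b := B ^ (1/p) with hbdef
    have ha : (0:ℝ) < a := Real.rpow_pos_of_pos hA _
    have hb : (0:ℝ) < b := Real.rpow_pos_of_pos hB _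
    have hap : a ^ p = A := by
      rw [hadef, ← Real.rpow_mul hA0, one_div, inv_mul_cancel₀ hp0.ne', Real.rpow_one]
    have hbp : b ^ p = B := by
      rw [hbdef, ← Real.rpow_mul hB0, one_div, inv_mul_cancel₀ hp0.ne', Real.rpow_one]
    have hlam : (0:ℝ) < b / a := div_pos hb ha
    have h1 := hmaster _ hlam
    refine h1.trans (le_of_eq ?_)
    have f1 : (b/a)⁻¹ * B = a * b^(p-1) := by
      rw [inv_div, ← hbp, show p = (p-1)+1 by ring, Real.rpow_add_one hb.ne']
      field_simp
      ring
    have f2 : (b/a) ^ (p-1) * A = b^(p-1) * a := by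
      rw [Real.div_rpow hb.le ha.le, ← hap, show p = (p-1)+1 by ring,
        Real.rpow_add_one ha.ne']
      field_simp
      ring
    calc 3^(p-1) * ((b/a)⁻¹ * B + 2 * (b/a)^(p-1) * A)
        = 3^(p-1) * ((b/a)⁻¹ * B) + 2 * 3^(p-1) * ((b/a)^(p-1) * A) := by ring
      _ = 3^(p-1) * (a * b^(p-1)) + 2 * 3^(p-1) * (b^(p-1) * a) := by rw [f1, f2]
      _ = (3^(p-1) * 3) * a * b^(p-1) := by ring
      _ = 3^p * a * b^(p-1) := by
          rw [show p = (p-1)+1 by ring, Real.rpow_add_one (by norm_num : (3:ℝ) ≠ 0)]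
          ring_nf
end
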